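/- The function u(r,t) = t^{-1/3} F(r·t^{-1/6}) with F(y) = (1/48)·max(d² - y², 0)², for any d > 0, is a solution of the radial Monge–Ampère equation u_t = -(1/r)·u_r·u_rr for all t > 0 and all r > 0 with r·t^{-1/6} ≠ d. -/

import Mathlib

/-!
Substituting `u = t^{-α} F(r t^{-β})` with `α + 4β = 1` into `u_t = -(1/r) u_r u_rr` turns the
equation at `y = r t^{-β}` into the profile ODE `y (α F + β y F') = F' F''`, all powers of `t`
cancelling. For `F = (1/48)(d² - y²)₊²` this holds where `d² - y² > 0` by a polynomial identity,
and trivially where `F` vanishes; away from `|y| = d` the profile is twice differentiable.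
-/

open Real Filter Topology

def RadialMongeAmpereAt (u : ℝ → ℝ → ℝ) (r t : ℝ) : Prop :=
  deriv (fun s => u r s) t
    = -(1 / r) * deriv (fun ρ => u ρ t) r * deriv (fun ρ => deriv (fun ρ' => u ρ' t) ρ) r

theorem radialMongeAmpereAt_selfSimilar {α β r t F'' : ℝ} {F F' : ℝ → ℝ}
    (hαβ : α + 4 * β = 1) (hr : 0 < r) (ht : 0 < t)
    (hF : ∀ y, HasDerivAt F (F' y) y) (hF' : HasDerivAt F' F'' (r * t ^ (-β)))
    (hode : r * t ^ (-β) * (α * F (r * t ^ (-β)) + β * (r * t ^ (-β)) * F' (r * t ^ (-β)))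
      = F' (r * t ^ (-β)) * F'') :
    RadialMongeAmpereAt (fun ρ s => s ^ (-α) * F (ρ * s ^ (-β))) r t := by
  set A := t ^ (-α)
  set c := t ^ (-β)
  have hspace : ∀ ρ, HasDerivAt (fun ρ => A * F (ρ * c)) (A * (F' (ρ * c) * c)) ρ := fun ρ =>
    ((hF (ρ * c)).comp ρ (hasDerivAt_mul_const c)).const_mul A
  have hspace' : HasDerivAt (fun ρ => A * (F' (ρ * c) * c)) (A * (F'' * c * c)) r :=
    ((hF'.comp r (hasDerivAt_mul_const c)).mul_const c).const_mul A
  have htime : HasDerivAt (fun s => s ^ (-α) * F (r * s ^ (-β)))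
      (-α * t ^ (-α - 1) * F (r * c) + A * (F' (r * c) * (r * (-β * t ^ (-β - 1))))) t :=
    (hasDerivAt_rpow_const (Or.inl ht.ne')).mul
      ((hF _).comp t ((hasDerivAt_rpow_const (Or.inl ht.ne')).const_mul r))
  have hc4 : c ^ 4 = t ^ (4 * -β) := by
    rw [show (4 : ℝ) * -β = -β * (4 : ℕ) by push_cast; ring, rpow_mul ht.le, rpow_natCast]
  have hpow₁ : t ^ (-α - 1) = A ^ 2 * c ^ 4 := by
    rw [hc4, sq, ← rpow_add ht, ← rpow_add ht]
    congr 1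
    linarith
  have hpow₂ : t ^ (-β - 1) = A * c * c ^ 4 := by
    rw [hc4, ← rpow_add ht, ← rpow_add ht]
    congr 1
    linarith
  unfold RadialMongeAmpereAt
  rw [htime.deriv, funext fun ρ => (hspace ρ).deriv, hspace'.deriv, hpow₁, hpow₂]
  rw [show -(1 / r) * (A * (F' (r * c) * c)) * (A * (F'' * c * c))
    = -(A ^ 2 * c ^ 3 / r) * (F' (r * c) * F'') by ring, ← hode]
  field_simp
  ring

noncomputable def sourceProfile (d y : ℝ) : ℝ := (1 / 48) * max (d ^ 2 - y ^ 2) 0 ^ 2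

noncomputable def sourceProfileDeriv (d y : ℝ) : ℝ := -(y * max (d ^ 2 - y ^ 2) 0) / 12

theorem hasDerivAt_max_zero_sq (x : ℝ) :
    HasDerivAt (fun x : ℝ => max x 0 ^ 2) (2 * max x 0) x := by
  refine hasDerivAt_of_hasDerivAt_of_ne' (f := fun x : ℝ => max x 0 ^ 2)
    (g := fun x => 2 * max x 0) (x := 0) (fun y hy => ?_) (by fun_prop) (by fun_prop) x
  rcases hy.lt_or_gt with hy | hy
  · have hzero : (fun x : ℝ => max x 0 ^ 2) =ᶠ[𝓝 y] fun _ => 0 := by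
      filter_upwards [Iio_mem_nhds hy] with z hz
      simp [(Set.mem_Iio.1 hz).le]
    rw [max_eq_right hy.le, mul_zero]
    exact (hasDerivAt_const y 0).congr_of_eventuallyEq hzero
  · have hsq : (fun x : ℝ => max x 0 ^ 2) =ᶠ[𝓝 y] fun x => x ^ 2 := by
      filter_upwards [Ioi_mem_nhds hy] with z hz
      rw [max_eq_left hz.le]
    rw [max_eq_left hy.le]
    simpa using (hasDerivAt_pow 2 y).congr_of_eventuallyEq hsq

theorem hasDerivAt_sourceProfile (d y : ℝ) :
    HasDerivAt (sourceProfile d) (sourceProfileDeriv d y) y := by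
  have := ((hasDerivAt_max_zero_sq _).comp y (((hasDerivAt_pow 2 y).const_sub (d ^ 2)))).const_mul
    (1 / 48 : ℝ)
  refine this.congr_deriv ?_
  rw [sourceProfileDeriv]
  push_cast
  ring

theorem sourceProfile_ode {d y : ℝ} (hy : y ^ 2 ≠ d ^ 2) :
    ∃ F'', HasDerivAt (sourceProfileDeriv d) F'' y ∧
      y * (1 / 3 * sourceProfile d y + 1 / 6 * y * sourceProfileDeriv d y)
        = sourceProfileDeriv d y * F'' := by
  rcases hy.lt_or_gt with hy | hy
  · have hpoly : sourceProfileDeriv d =ᶠ[𝓝 y] fun z => -(z * (d ^ 2 - z ^ 2)) / 12 := by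
      filter_upwards [(continuous_pow 2).continuousAt.eventually_lt continuousAt_const hy]
        with z hz
      rw [sourceProfileDeriv, max_eq_left (sub_nonneg.2 hz.le)]
    refine ⟨(3 * y ^ 2 - d ^ 2) / 12, ?_, ?_⟩
    · have := (((hasDerivAt_id y).mul ((hasDerivAt_pow 2 y).const_sub (d ^ 2))).neg.div_const 12)
      refine (this.congr_deriv ?_).congr_of_eventuallyEq hpoly
      simp only [id_eq, Nat.cast_ofNat]
      ring
    · rw [sourceProfile, sourceProfileDeriv, max_eq_left (sub_nonneg.2 hy.le)]
      ring
  · have hzero : sourceProfileDeriv d =ᶠ[𝓝 y] fun _ => 0 := by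
      filter_upwards [continuousAt_const.eventually_lt (continuous_pow 2).continuousAt hy]
        with z hz
      simp [sourceProfileDeriv, max_eq_right (sub_nonpos.2 hz.le)]
    refine ⟨0, (hasDerivAt_const y 0).congr_of_eventuallyEq hzero, ?_⟩
    rw [sourceProfile, sourceProfileDeriv, max_eq_right (sub_nonpos.2 hy.le)]
    ring

/-- The source-type similarity solution `u(r,t) = t^{-1/3} F(r t^{-1/6})` with
`F(y) = (1/48)(d² - y²)₊²` solves the radial Monge–Ampère equation
`u_t = -(1/r) u_r u_rr` for all `t > 0`, `r > 0` with `r t^{-1/6} ≠ d`. -/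
theorem stmt3 (d : ℝ) (hd : 0 < d)
    (F : ℝ → ℝ) (hF : ∀ y, F y = (1 / 48) * (max (d ^ 2 - y ^ 2) 0) ^ 2)
    (u : ℝ → ℝ → ℝ)
    (hu : ∀ r t : ℝ, u r t = t ^ (-(1 / 3) : ℝ) * F (r * t ^ (-(1 / 6) : ℝ))) :
    ∀ r t : ℝ, 0 < r → 0 < t → r * t ^ (-(1 / 6) : ℝ) ≠ d →
      deriv (fun s => u r s) t
        = -(1 / r) * deriv (fun ρ => u ρ t) r
            * deriv (fun ρ => deriv (fun ρ' => u ρ' t) ρ) r := by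
  obtain rfl : F = sourceProfile d := funext hF
  obtain rfl : u = fun r t => t ^ (-(1 / 3) : ℝ) * sourceProfile d (r * t ^ (-(1 / 6) : ℝ)) :=
    funext fun r => funext (hu r)
  intro r t hr ht hne
  have hy : (r * t ^ (-(1 / 6) : ℝ)) ^ 2 ≠ d ^ 2 := fun h =>
    hne ((sq_eq_sq₀ (mul_pos hr (rpow_pos_of_pos ht _)).le hd.le).1 h)
  obtain ⟨F'', hF'', hode⟩ := sourceProfile_ode hy
  exact radialMongeAmpereAt_selfSimilar (by norm_num) hr ht (hasDerivAt_sourceProfile d) hF'' hode
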